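/- For each n ≥ 1, the function p ↦ W(p,2n) = \sum_{k=n+1}^{2n} C(2n,k)(p^k (1-p)^{2n+1-k} - p^{2n+1-k} (1-p)^k) is strictly concave on (1/2, 1), i.e., its second derivative in p is negative. -/

import Mathlib

/-!
Adding `p = p (p + q) ^ (2n)` to `W(p, 2n)` (with `q = 1 - p`), splitting the binomial expansion
at `k = n`, reflecting `k ↦ 2n - k` and using Pascal's rule gives
`W(p, 2n) = P(Bin(2n + 1, p) > n) - p`. The derivative of an upper tail of Bernstein polynomials
telescopes, so `W' = (2n + 1) C(2n, n) (p (1 - p)) ^ n - 1` and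
`W'' = (2n + 1) C(2n, n) n (p (1 - p)) ^ (n - 1) (1 - 2p)`, which is negative for `p > 1/2`.
-/

open Finset Polynomial

lemma sum_Icc_succ_eq_sum_Icc_shift {M : Type*} [AddCommMonoid M] (f : ℕ → M) (a b : ℕ) :
    ∑ k ∈ Icc (a + 1) (b + 1), f k = ∑ i ∈ Icc a b, f (i + 1) := by
  rw [← map_add_right_Icc, sum_map]
  rfl

lemma sum_Icc_eq_add_sum_Icc_succ {M : Type*} [AddCommMonoid M] (f : ℕ → M) {a b : ℕ}
    (hab : a ≤ b) : ∑ k ∈ Icc a b, f k = f a + ∑ k ∈ Icc (a + 1) b, f k := by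
  rw [Icc_add_one_left_eq_Ioc, add_sum_Ioc_eq_sum_Icc hab]

section Identity

variable {R : Type*} [CommRing R]

lemma sum_Icc_choose_succ_mul_pow (p q : R) {j m : ℕ} (hjm : j ≤ m) :
    ∑ k ∈ Icc (j + 1) (m + 1), ((m + 1).choose k : R) * (p ^ k * q ^ (m + 1 - k)) =
      ∑ k ∈ Icc (j + 1) m, (m.choose k : R) * (p ^ k * q ^ (m + 1 - k)) +
        p * ∑ k ∈ Icc j m, (m.choose k : R) * (p ^ k * q ^ (m - k)) := by
  have htop : ∑ k ∈ Icc (j + 1) (m + 1), (m.choose k : R) * (p ^ k * q ^ (m + 1 - k)) =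
      ∑ k ∈ Icc (j + 1) m, (m.choose k : R) * (p ^ k * q ^ (m + 1 - k)) := by
    rw [sum_Icc_succ_top (by omega), Nat.choose_succ_self, Nat.cast_zero, zero_mul, add_zero]
  rw [← htop, mul_sum, sum_Icc_succ_eq_sum_Icc_shift, sum_Icc_succ_eq_sum_Icc_shift,
    ← sum_add_distrib]
  refine sum_congr rfl fun i _ => ?_
  rw [Nat.choose_succ_succ', Nat.cast_add, Nat.add_sub_add_right]
  ring

lemma sum_Icc_choose_mul_pow_reflect (p q : R) (n : ℕ) :
    ∑ k ∈ Icc (n + 1) (2 * n), ((2 * n).choose k : R) * (p ^ (2 * n + 1 - k) * q ^ k) =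
      p * ∑ k ∈ range n, ((2 * n).choose k : R) * (p ^ k * q ^ (2 * n - k)) := by
  rw [mul_sum]
  refine sum_nbij' (fun k => 2 * n - k) (fun k => 2 * n - k) ?_ ?_ ?_ ?_ ?_
  all_goals intro k hk; simp only [mem_Icc, mem_range] at hk ⊢
  · omega
  · omega
  · omega
  · omega
  · rw [← Nat.choose_symm (by omega), show 2 * n + 1 - k = (2 * n - k) + 1 by omega,
      Nat.sub_sub_self (by omega : k ≤ 2 * n)]
    ring

lemma sum_Icc_choose_mul_sub_add_mul_add_pow (p q : R) (n : ℕ) :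
    ∑ k ∈ Icc (n + 1) (2 * n),
        ((2 * n).choose k : R) * (p ^ k * q ^ (2 * n + 1 - k) - p ^ (2 * n + 1 - k) * q ^ k) +
      p * (p + q) ^ (2 * n) =
      ∑ k ∈ Icc (n + 1) (2 * n + 1),
        ((2 * n + 1).choose k : R) * (p ^ k * q ^ (2 * n + 1 - k)) := by
  set b : ℕ → R := fun k => ((2 * n).choose k : R) * (p ^ k * q ^ (2 * n - k))
  have hbinom :
      (p + q) ^ (2 * n) = ∑ k ∈ range n, b k + (b n + ∑ k ∈ Icc (n + 1) (2 * n), b k) := by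
    rw [← sum_Icc_eq_add_sum_Icc_succ _ (by omega), ← Ico_add_one_right_eq_Icc,
      sum_range_add_sum_Ico _ (by omega), add_pow]
    exact sum_congr rfl fun k _ => by ring
  have hpascal := sum_Icc_choose_succ_mul_pow p q (by omega : n ≤ 2 * n)
  rw [sum_Icc_eq_add_sum_Icc_succ _ (by omega : n ≤ 2 * n)] at hpascal
  simp only [hpascal, hbinom, mul_sub, sum_sub_distrib, sum_Icc_choose_mul_pow_reflect, b]
  ring

end Identity

lemma derivative_sum_Icc_bernsteinPolynomial (R : Type*) [CommRing R] {j m : ℕ} (hjm : j ≤ m) :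
    derivative (∑ k ∈ Icc (j + 1) (m + 1), bernsteinPolynomial R (m + 1) k) =
      (m + 1) * bernsteinPolynomial R m j := by
  rw [sum_Icc_succ_eq_sum_Icc_shift, derivative_sum]
  simp only [bernsteinPolynomial.derivative_succ_aux]
  have htel := sum_Icc_sub hjm (bernsteinPolynomial R m)
  rw [bernsteinPolynomial.eq_zero_of_lt R (Nat.lt_succ_self m), sum_sub_distrib] at htel
  rw [← mul_sum, sum_sub_distrib]
  linear_combination (-(m + 1 : R[X])) * htel

/-- `willingnessToPay n p` is the paper's `W(p, 2n)`. -/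
def willingnessToPay (n : ℕ) (p : ℝ) : ℝ :=
  ∑ k ∈ Icc (n + 1) (2 * n),
    ((2 * n).choose k : ℝ) *
      (p ^ k * (1 - p) ^ (2 * n + 1 - k) - p ^ (2 * n + 1 - k) * (1 - p) ^ k)

lemma willingnessToPay_eq_eval_sub (n : ℕ) (p : ℝ) :
    willingnessToPay n p =
      (∑ k ∈ Icc (n + 1) (2 * n + 1), bernsteinPolynomial ℝ (2 * n + 1) k).eval p - p := by
  have h := sum_Icc_choose_mul_sub_add_mul_add_pow p (1 - p) n
  rw [add_sub_cancel, one_pow, mul_one] at h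
  simp only [willingnessToPay, eval_finsetSum, bernsteinPolynomial, eval_mul, eval_pow, eval_sub,
    eval_one, eval_X, eval_natCast, mul_assoc]
  linear_combination h

lemma hasDerivAt_willingnessToPay (n : ℕ) (p : ℝ) :
    HasDerivAt (willingnessToPay n)
      ((2 * n + 1) * (2 * n).choose n * (p * (1 - p)) ^ n - 1) p := by
  set P := ∑ k ∈ Icc (n + 1) (2 * n + 1), bernsteinPolynomial ℝ (2 * n + 1) k
  rw [show willingnessToPay n = fun x => P.eval x - x from funext (willingnessToPay_eq_eval_sub n)]
  refine ((Polynomial.hasDerivAt P p).fun_sub (hasDerivAt_id' p)).congr_deriv ?_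
  rw [derivative_sum_Icc_bernsteinPolynomial ℝ (by omega : n ≤ 2 * n)]
  simp only [bernsteinPolynomial, eval_mul, eval_pow, eval_sub, eval_one, eval_X, eval_natCast,
    eval_add, show 2 * n - n = n by omega, mul_pow]
  push_cast
  ring

lemma deriv2_willingnessToPay_neg {n : ℕ} (hn : 1 ≤ n) {p : ℝ}
    (hp : p ∈ Set.Ioo (1 / 2 : ℝ) 1) :
    deriv^[2] (willingnessToPay n) p < 0 := by
  set c : ℝ := (2 * n + 1) * (2 * n).choose n
  have hderiv : deriv (willingnessToPay n) = fun p => c * (p * (1 - p)) ^ n - 1 :=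
    funext fun p => (hasDerivAt_willingnessToPay n p).deriv
  have hderiv2 : HasDerivAt (fun p : ℝ => c * (p * (1 - p)) ^ n - 1)
      (c * (n * (p * (1 - p)) ^ (n - 1) * (1 - 2 * p))) p :=
    ((((hasDerivAt_id' p).fun_mul ((hasDerivAt_id' p).const_sub 1)).fun_pow n).const_mul c
      |>.sub_const 1).congr_deriv (by ring)
  obtain ⟨hp1, hp2⟩ := hp
  have hc : 0 < c := by
    have := Nat.choose_pos (by omega : n ≤ 2 * n)
    positivity
  have hn' : (0 : ℝ) < n := by exact_mod_cast hn
  have hpq : 0 < (p * (1 - p)) ^ (n - 1) := pow_pos (mul_pos (by linarith) (by linarith)) _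
  rw [Function.iterate_succ_apply', Function.iterate_one, hderiv, hderiv2.deriv]
  exact mul_neg_of_pos_of_neg hc (mul_neg_of_pos_of_neg (by positivity) (by linarith))

/-- For each `n ≥ 1`, `p ↦ W(p,2n)` is strictly concave on `(1/2,1)`,
i.e. its second derivative is negative there. -/
theorem stmt_5 (n : ℕ) (hn : 1 ≤ n) :
    StrictConcaveOn ℝ (Set.Ioo (1/2:ℝ) 1)
      (fun p : ℝ => ∑ k ∈ Finset.Icc (n+1) (2*n),
        (Nat.choose (2*n) k : ℝ) *
          (p ^ k * (1-p) ^ (2*n+1-k) - p ^ (2*n+1-k) * (1-p) ^ k)) ∧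
    ∀ p ∈ Set.Ioo (1/2:ℝ) 1,
      iteratedDeriv 2
        (fun p : ℝ => ∑ k ∈ Finset.Icc (n+1) (2*n),
          (Nat.choose (2*n) k : ℝ) *
            (p ^ k * (1-p) ^ (2*n+1-k) - p ^ (2*n+1-k) * (1-p) ^ k)) p < 0 := by
  change StrictConcaveOn ℝ _ (willingnessToPay n) ∧
    ∀ p ∈ Set.Ioo (1/2:ℝ) 1, iteratedDeriv 2 (willingnessToPay n) p < 0
  have hcont : Continuous (willingnessToPay n) :=
    continuous_iff_continuousAt.2 fun p => (hasDerivAt_willingnessToPay n p).continuousAt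
  refine ⟨strictConcaveOn_of_deriv2_neg (convex_Ioo _ _) hcont.continuousOn fun p hp => ?_,
    fun p hp => by rw [iteratedDeriv_eq_iterate]; exact deriv2_willingnessToPay_neg hn hp⟩
  rw [interior_Ioo] at hp
  exact deriv2_willingnessToPay_neg hn hp
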